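/- arXiv:math/0309302 — 5 statements merged into one kernel-verified Lean document; each statement's English description precedes it below -/
import Mathlib

section
/- For integers m ≥ k ≥ 0 and δ ∈ ℕ, the following identity of Gaussian binomial coefficients holds in ℤ[v, v⁻¹]: ∑_{0 ≤ i ≤ δ} (-1)^i · [k-1+i choose i]_v · [m choose δ-i]_v · v^{i(m-k)} = [m-k choose δ]_v · v^{-kδ}. -/
open LaurentPolynomial Finset

/-- The (symmetric) Gaussian binomial coefficient `[n choose k]_v` in the ring of
Laurent polynomials `ℤ[v, v⁻¹]`, defined via the Pascal-type recursion
`[n+1 choose k+1] = v^(k+1) [n choose k+1] + v^(-(n-k)) [n choose k]`,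
which agrees with the product formula
`[n choose r] = ∏_{s=1}^{r} (v^{n-s+1} - v^{-(n-s+1)})/(v^s - v^{-s})`,
and is `0` for `r > n`. -/
noncomputable def qbinom : ℕ → ℕ → LaurentPolynomial ℤ
  | _, 0 => 1
  | 0, _ + 1 => 0
  | n + 1, k + 1 => T (k + 1 : ℤ) * qbinom n (k + 1) + T (-(n - k : ℤ)) * qbinom n k

lemma qbinom_zero (n : ℕ) : qbinom n 0 = 1 := by cases n <;> rfl

lemma qbinom_succ (n k : ℕ) :
    qbinom (n + 1) (k + 1)
      = T ((k : ℤ) + 1) * qbinom n (k + 1) + T (-((n : ℤ) - (k : ℤ))) * qbinom n k := rfl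

lemma qbinom_of_lt : ∀ {n k : ℕ}, n < k → qbinom n k = 0
  | 0, _ + 1, _ => rfl
  | n + 1, k + 1, h => by
    rw [qbinom_succ, qbinom_of_lt (show n < k + 1 by omega),
      qbinom_of_lt (show n < k by omega)]
    ring

lemma Tm' (a b c : ℤ) (h : a + b = c) : (T a * T b : LaurentPolynomial ℤ) = T c := by
  rw [← T_add, h]

lemma Tm1 (a b : ℤ) (h : a + b = 0) : (T a * T b : LaurentPolynomial ℤ) = 1 := by
  rw [← T_add, h, T_zero]

lemma Te {a b : ℤ} (h : a = b) : (T a : LaurentPolynomial ℤ) = T b := by rw [h]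

lemma qbinom_one (n : ℕ) :
    (T 1 - T (-1)) * qbinom n 1 = T (n : ℤ) - T (-(n : ℤ)) := by
  induction n with
  | zero => simp [qbinom_of_lt]
  | succ n ih =>
    have h := qbinom_succ n 0
    rw [show (0:ℕ)+1 = 1 from rfl] at h
    rw [h, qbinom_zero]
    push_cast
    linear_combination (T 1 : LaurentPolynomial ℤ) * ih
      + Tm' 1 (-((n:ℤ) - 0)) (1 - (n:ℤ)) (by ring)
      + Tm' 1 (n:ℤ) ((n:ℤ)+1) (by ring)
      - Tm' 1 (-(n:ℤ)) (1 - (n:ℤ)) (by ring)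
      - Tm' (-1) (-((n:ℤ) - 0)) (-((n:ℤ)+1)) (by ring)

/-- The dual Pascal recursion for `qbinom`. -/
lemma qbinom_succ' : ∀ (n k : ℕ),
    qbinom (n + 1) (k + 1)
      = T (-((k : ℤ) + 1)) * qbinom n (k + 1) + T ((n : ℤ) - (k : ℤ)) * qbinom n k
  | 0, 0 => by
      rw [qbinom_succ, qbinom_of_lt (by omega : (0:ℕ) < 1), qbinom_zero]
      push_cast; ring
  | 0, k + 1 => by
      rw [qbinom_succ, qbinom_of_lt (show (0:ℕ) < k + 2 by omega),
        qbinom_of_lt (show (0:ℕ) < k + 1 by omega)]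
      ring
  | n + 1, 0 => by
      have h := qbinom_succ (n+1) 0
      rw [show (0:ℕ)+1 = 1 from rfl] at h
      rw [h, qbinom_zero]
      have ho := qbinom_one (n+1)
      push_cast at ho ⊢
      linear_combination ho + Te (show (-((n:ℤ)+1-0)) = -((n:ℤ)+1) by ring)
        + Te (show ((n:ℤ)+1) = (n:ℤ)+1-0 by ring)
  | n + 1, k + 1 => by
      have h1 := qbinom_succ (n+1) (k+1)
      have h2 := qbinom_succ' n (k+1)
      have h3 := qbinom_succ' n k
      have h4 := qbinom_succ n (k+1)
      have h5 := qbinom_succ n k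
      push_cast at h1 h2 h3 h4 h5 ⊢
      linear_combination h1 + T ((k:ℤ)+1+1) * h2 + T (-((n:ℤ)+1-((k:ℤ)+1))) * h3
        - T (-((k:ℤ)+1+1)) * h4 - T ((n:ℤ)+1-((k:ℤ)+1)) * h5
        + qbinom n (k+1) * Tm' ((k:ℤ)+1+1) ((n:ℤ)-((k:ℤ)+1)) ((n:ℤ)+1) (by ring)
        + qbinom n (k+1) * Tm' (-((n:ℤ)+1-((k:ℤ)+1))) (-((k:ℤ)+1)) (-((n:ℤ)+1)) (by ring)
        + qbinom n k * Tm1 (-((n:ℤ)+1-((k:ℤ)+1))) ((n:ℤ)-(k:ℤ)) (by ring)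
        - qbinom n (k+1) * Tm' (-((k:ℤ)+1+1)) (-((n:ℤ)-((k:ℤ)+1))) (-((n:ℤ)+1)) (by ring)
        - qbinom n (k+1) * Tm' ((n:ℤ)+1-((k:ℤ)+1)) ((k:ℤ)+1) ((n:ℤ)+1) (by ring)
        - qbinom n k * Tm1 ((n:ℤ)+1-((k:ℤ)+1)) (-((n:ℤ)-(k:ℤ))) (by ring)

/-- Identity (i): for `m ≥ k ≥ 0` and `δ ∈ ℕ`,
`∑_{0 ≤ i ≤ δ} (-1)^i [k-1+i choose i]_v [m choose δ-i]_v v^{i(m-k)}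
  = [m-k choose δ]_v v^{-kδ}` in `ℤ[v,v⁻¹]`. -/
theorem gauss_binomial_identity_i (m k δ : ℕ) (hkm : k ≤ m) :
    ∑ i ∈ range (δ + 1),
      (-1 : LaurentPolynomial ℤ) ^ i * qbinom (k + i - 1) i * qbinom m (δ - i) *
        T ((i : ℤ) * ((m : ℤ) - (k : ℤ))) =
      qbinom (m - k) δ * T (-(k : ℤ) * (δ : ℤ)) := by
  induction k generalizing δ with
  | zero =>
    rw [Finset.sum_eq_single 0]
    · simp [qbinom_zero]
    · intro i _ hne
      rw [qbinom_of_lt (show 0 + i - 1 < i by omega)]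
      ring
    · intro h
      simp at h
  | succ k ih =>
    have hkm' : k ≤ m := by omega
    induction δ with
    | zero => simp [qbinom_zero]
    | succ d ihd =>
      rw [Finset.sum_range_succ']
      have key : ∀ i ∈ range (d + 1),
          (-1 : LaurentPolynomial ℤ) ^ (i + 1) * qbinom (k + 1 + (i + 1) - 1) (i + 1) *
              qbinom m (d + 1 - (i + 1)) * T ((↑(i + 1) : ℤ) * ((m : ℤ) - ↑(k + 1)))
            = (-1 : LaurentPolynomial ℤ) ^ (i + 1) * qbinom (k + (i + 1) - 1) (i + 1) *
                qbinom m (d + 1 - (i + 1)) * T ((↑(i + 1) : ℤ) * ((m : ℤ) - (k : ℤ)))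
              - T ((m : ℤ) - 2 * k - 1) *
                ((-1 : LaurentPolynomial ℤ) ^ i * qbinom (k + 1 + i - 1) i * qbinom m (d - i) *
                  T ((i : ℤ) * ((m : ℤ) - ↑(k + 1)))) := by
        intro i _
        rw [show k + 1 + (i + 1) - 1 = (k + i) + 1 by omega,
          show k + (i + 1) - 1 = k + i by omega,
          show k + 1 + i - 1 = k + i by omega,
          show d + 1 - (i + 1) = d - i by omega,
          qbinom_succ (k + i) i]
        push_cast
        linear_combination ((-1 : LaurentPolynomial ℤ) ^ (i+1) * qbinom (k+i) (i+1) * qbinom m (d-i)) *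
            Tm' ((i:ℤ)+1) (((i:ℤ)+1) * ((m:ℤ) - ((k:ℤ)+1))) (((i:ℤ)+1)*((m:ℤ)-(k:ℤ))) (by ring)
          + ((-1 : LaurentPolynomial ℤ) ^ (i+1) * qbinom (k+i) i * qbinom m (d-i)) *
            Tm' (-((k:ℤ) + (i:ℤ) - (i:ℤ))) (((i:ℤ)+1) * ((m:ℤ) - ((k:ℤ)+1)))
              ((i:ℤ)*((m:ℤ)-(k:ℤ)-1) + ((m:ℤ)-2*(k:ℤ)-1)) (by ring)
          + ((-1 : LaurentPolynomial ℤ) ^ i * qbinom (k+i) i * qbinom m (d-i)) *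
            Tm' ((m:ℤ)-2*(k:ℤ)-1) ((i:ℤ) * ((m:ℤ) - ((k:ℤ)+1)))
              ((i:ℤ)*((m:ℤ)-(k:ℤ)-1) + ((m:ℤ)-2*(k:ℤ)-1)) (by ring)
      rw [Finset.sum_congr rfl key, Finset.sum_sub_distrib, ← Finset.mul_sum, ihd]
      have hih := ih (d + 1) hkm'
      rw [Finset.sum_range_succ'] at hih
      have hmk : m - k = (m - (k + 1)) + 1 := by omega
      rw [hmk] at hih
      have hB := qbinom_succ' (m - (k + 1)) d
      have hc : ((m - (k + 1) : ℕ) : ℤ) = (m : ℤ) - (k : ℤ) - 1 := by omega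
      rw [hc] at hB
      simp only [pow_zero, one_mul, Nat.cast_zero, zero_mul, T_zero, mul_one,
        Nat.sub_zero, qbinom_zero] at hih ⊢
      push_cast at hih hB ⊢
      linear_combination hih + T (-(k:ℤ) * ((d:ℤ)+1)) * hB
        + qbinom (m - (k+1)) (d+1) *
            Tm' (-(k:ℤ) * ((d:ℤ)+1)) (-((d:ℤ)+1)) (-((k:ℤ)+1) * ((d:ℤ)+1)) (by ring)
        + qbinom (m - (k+1)) d *
            Tm' (-(k:ℤ) * ((d:ℤ)+1)) ((m:ℤ)-(k:ℤ)-1-(d:ℤ))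
              ((m:ℤ)-2*(k:ℤ)-1 + (-((k:ℤ)+1) * (d:ℤ))) (by ring)
        - qbinom (m - (k+1)) d *
            Tm' ((m:ℤ)-2*(k:ℤ)-1) (-((k:ℤ)+1) * (d:ℤ))
              ((m:ℤ)-2*(k:ℤ)-1 + (-((k:ℤ)+1) * (d:ℤ))) (by ring)
end

section
/- The quadratic form Q_M(x₁,…,x₇,m,s,p) = x₁² + x₂² + x₃² + x₄² + x₅² + x₆² + x₇² + m² + s² + p² + x₂x₄ + x₂m + x₃x₆ + x₃x₇ + x₃s + x₃p + x₄m + x₅x₆ + x₅x₇ + x₅s + x₅p + x₆x₇ + x₆s + 2x₆p + x₇p + sp − x₁x₄ − x₁m − x₂x₆ − x₂x₇ − x₂s − x₂p − x₃x₄ − x₃m − x₄x₇ − x₄p − x₆m − ms is weakly positive: Q_M(x₁,…,x₇,m,s,p) ≥ 0 for all (x₁,…,x₇,m,s,p) ∈ ℕ¹⁰. -/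
/-- The quadratic (unit) form `Q_M` in ten variables. -/
def QM (x1 x2 x3 x4 x5 x6 x7 m s p : ℤ) : ℤ :=
  x1 ^ 2 + x2 ^ 2 + x3 ^ 2 + x4 ^ 2 + x5 ^ 2 + x6 ^ 2 + x7 ^ 2 + m ^ 2 + s ^ 2 + p ^ 2
    + x2 * x4 + x2 * m + x3 * x6 + x3 * x7 + x3 * s + x3 * p + x4 * m + x5 * x6 + x5 * x7
    + x5 * s + x5 * p + x6 * x7 + x6 * s + 2 * x6 * p + x7 * p + s * p
    - x1 * x4 - x1 * m - x2 * x6 - x2 * x7 - x2 * s - x2 * p - x3 * x4 - x3 * m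
    - x4 * x7 - x4 * p - x6 * m - m * s

/-- `Q_M` is weakly positive: it takes non-negative values on all of `ℕ¹⁰`. -/
theorem QM_weakly_positive (x1 x2 x3 x4 x5 x6 x7 m s p : ℕ) :
    0 ≤ QM x1 x2 x3 x4 x5 x6 x7 m s p := by
  have key : ∀ a b c d e f g m' s' p' : ℤ,
      4 * QM a b c d e f g m' s' p' =
      2 * ((a - d) ^ 2 + (a - m') ^ 2 + (d - c - g - p') ^ 2 + (m' - c - f - s') ^ 2
        + (b - f - g) ^ 2 + (b - s' - p') ^ 2)
      + 4 * (e ^ 2 + b * d + b * m' + d * m' + e * f + e * g + e * s' + e * p'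
        + 2 * f * p') := by
    intro a b c d e f g m' s' p'
    unfold QM; ring
  have h4 : 0 ≤ 4 * QM x1 x2 x3 x4 x5 x6 x7 m s p := by
    rw [key]
    have h1 : (0:ℤ) ≤ (x2:ℤ) * x4 := by positivity
    have h2 : (0:ℤ) ≤ (x2:ℤ) * m := by positivity
    have h3 : (0:ℤ) ≤ (x4:ℤ) * m := by positivity
    have h5 : (0:ℤ) ≤ (x5:ℤ) * x6 := by positivity
    have h6 : (0:ℤ) ≤ (x5:ℤ) * x7 := by positivity
    have h7 : (0:ℤ) ≤ (x5:ℤ) * s := by positivity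
    have h8 : (0:ℤ) ≤ (x5:ℤ) * p := by positivity
    have h9 : (0:ℤ) ≤ (x6:ℤ) * p := by positivity
    positivity
  linarith
end

section
/- Suppose (a₁,…,a₁₀) ∈ ℕ¹⁰ satisfies a₅+a₆+a₇ ≥ a₁+a₂+a₃, a₅+a₆ ≥ a₈+a₉, a₉ ≥ a₆, a₂ ≥ a₆, a₁ ≥ a₅, and a₁₀ ≥ a₈. Then for all non-negative integers x₁,…,x₇,m,s,p, the expression L_{P₁} + Q_M is non-negative, where L_{P₁} = (a₁₀−a₈)x₁ + (a₅+a₆−a₈−a₉)x₂ + (a₂−a₆)x₃ + (a₅−a₈)x₄ + (a₅+a₆+a₇−a₁−a₂−a₃)x₅ + (a₁+a₂−a₅−a₆)x₆ + (a₁−a₅)x₇ + (a₉−a₆)m + (a₇−a₃)s + (a₆+a₇−a₂−a₃)p (computed in ℤ), and Q_M is the weakly positive quadratic form. Moreover L_{P₁} + Q_M = 0 if and only if x₁ = ⋯ = x₇ = m = s = p = 0. -/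
set_option maxHeartbeats 1000000 in
/-- Degree estimate for polynomial element 1.(1): under the six defining
inequalities, `L_{P₁} + Q_M ≥ 0` on `ℕ¹⁰`, with equality iff all variables vanish. -/
theorem LP1_add_QM_nonneg (a1 a2 a3 a4 a5 a6 a7 a8 a9 a10 : ℕ)
    (h1 : a5 + a6 + a7 ≥ a1 + a2 + a3) (h2 : a5 + a6 ≥ a8 + a9)
    (h3 : a9 ≥ a6) (h4 : a2 ≥ a6) (h5 : a1 ≥ a5) (h6 : a10 ≥ a8) :
    ∀ x1 x2 x3 x4 x5 x6 x7 m s p : ℕ,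
      0 ≤ ((a10 : ℤ) - a8) * x1 + ((a5 : ℤ) + a6 - a8 - a9) * x2 + ((a2 : ℤ) - a6) * x3
          + ((a5 : ℤ) - a8) * x4 + ((a5 : ℤ) + a6 + a7 - a1 - a2 - a3) * x5
          + ((a1 : ℤ) + a2 - a5 - a6) * x6 + ((a1 : ℤ) - a5) * x7
          + ((a9 : ℤ) - a6) * m + ((a7 : ℤ) - a3) * s + ((a6 : ℤ) + a7 - a2 - a3) * p
          + QM x1 x2 x3 x4 x5 x6 x7 m s p ∧
      (((a10 : ℤ) - a8) * x1 + ((a5 : ℤ) + a6 - a8 - a9) * x2 + ((a2 : ℤ) - a6) * x3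
          + ((a5 : ℤ) - a8) * x4 + ((a5 : ℤ) + a6 + a7 - a1 - a2 - a3) * x5
          + ((a1 : ℤ) + a2 - a5 - a6) * x6 + ((a1 : ℤ) - a5) * x7
          + ((a9 : ℤ) - a6) * m + ((a7 : ℤ) - a3) * s + ((a6 : ℤ) + a7 - a2 - a3) * p
          + QM x1 x2 x3 x4 x5 x6 x7 m s p = 0 ↔
        x1 = 0 ∧ x2 = 0 ∧ x3 = 0 ∧ x4 = 0 ∧ x5 = 0 ∧ x6 = 0 ∧ x7 = 0 ∧
          m = 0 ∧ s = 0 ∧ p = 0) := by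
  intro x1 x2 x3 x4 x5 x6 x7 m s p
  -- integer casts and nonnegativity
  have c1 : (a1:ℤ) ≥ a5 := by exact_mod_cast h5
  have c2 : (a2:ℤ) ≥ a6 := by exact_mod_cast h4
  have c3 : (a9:ℤ) ≥ a6 := by exact_mod_cast h3
  have c4 : (a10:ℤ) ≥ a8 := by exact_mod_cast h6
  have c5 : (a5:ℤ) + a6 ≥ a8 + a9 := by exact_mod_cast h2
  have c6 : (a5:ℤ) + a6 + a7 ≥ a1 + a2 + a3 := by exact_mod_cast h1
  have nx1 : (0:ℤ) ≤ x1 := Int.natCast_nonneg x1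
  have nx2 : (0:ℤ) ≤ x2 := Int.natCast_nonneg x2
  have nx3 : (0:ℤ) ≤ x3 := Int.natCast_nonneg x3
  have nx4 : (0:ℤ) ≤ x4 := Int.natCast_nonneg x4
  have nx5 : (0:ℤ) ≤ x5 := Int.natCast_nonneg x5
  have nx6 : (0:ℤ) ≤ x6 := Int.natCast_nonneg x6
  have nx7 : (0:ℤ) ≤ x7 := Int.natCast_nonneg x7
  have nm : (0:ℤ) ≤ m := Int.natCast_nonneg m
  have ns : (0:ℤ) ≤ s := Int.natCast_nonneg s
  have np : (0:ℤ) ≤ p := Int.natCast_nonneg p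
  -- L ≥ 0 : each coefficient is nonnegative and each variable is nonnegative
  have hL : (0:ℤ) ≤ ((a10 : ℤ) - a8) * x1 + ((a5 : ℤ) + a6 - a8 - a9) * x2 + ((a2 : ℤ) - a6) * x3
      + ((a5 : ℤ) - a8) * x4 + ((a5 : ℤ) + a6 + a7 - a1 - a2 - a3) * x5
      + ((a1 : ℤ) + a2 - a5 - a6) * x6 + ((a1 : ℤ) - a5) * x7
      + ((a9 : ℤ) - a6) * m + ((a7 : ℤ) - a3) * s + ((a6 : ℤ) + a7 - a2 - a3) * p := by
    have t1 := mul_nonneg (by linarith : (0:ℤ) ≤ (a10:ℤ) - a8) nx1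
    have t2 := mul_nonneg (by linarith : (0:ℤ) ≤ (a5:ℤ) + a6 - a8 - a9) nx2
    have t3 := mul_nonneg (by linarith : (0:ℤ) ≤ (a2:ℤ) - a6) nx3
    have t4 := mul_nonneg (by linarith : (0:ℤ) ≤ (a5:ℤ) - a8) nx4
    have t5 := mul_nonneg (by linarith : (0:ℤ) ≤ (a5:ℤ) + a6 + a7 - a1 - a2 - a3) nx5
    have t6 := mul_nonneg (by linarith : (0:ℤ) ≤ (a1:ℤ) + a2 - a5 - a6) nx6
    have t7 := mul_nonneg (by linarith : (0:ℤ) ≤ (a1:ℤ) - a5) nx7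
    have t8 := mul_nonneg (by linarith : (0:ℤ) ≤ (a9:ℤ) - a6) nm
    have t9 := mul_nonneg (by linarith : (0:ℤ) ≤ (a7:ℤ) - a3) ns
    have t10 := mul_nonneg (by linarith : (0:ℤ) ≤ (a6:ℤ) + a7 - a2 - a3) np
    linarith
  -- copositivity certificate for 2 * QM
  have key : 2 * QM x1 x2 x3 x4 x5 x6 x7 m s p =
      ((x1:ℤ) - x4)^2 + ((x1:ℤ) - m)^2 + ((x2:ℤ) - x3 + x4 + m - x6 - x7 - s - p)^2
      + ((x2:ℤ) + x3)^2 + 2*(x5:ℤ)^2 + 2*(x5:ℤ)*(x6 + x7 + s + p) + ((x6:ℤ) + p)^2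
      + ((x7:ℤ) - s)^2 + 2*(x4:ℤ)*x6 + 2*(x4:ℤ)*s + 2*(m:ℤ)*x7 + 2*(m:ℤ)*p := by
    unfold QM; ring
  have q1 := sq_nonneg ((x1:ℤ) - x4)
  have q2 := sq_nonneg ((x1:ℤ) - m)
  have q3 := sq_nonneg ((x2:ℤ) - x3 + x4 + m - x6 - x7 - s - p)
  have q4 := sq_nonneg ((x2:ℤ) + x3)
  have q5 := sq_nonneg (x5:ℤ)
  have q6 : (0:ℤ) ≤ (x5:ℤ)*(x6 + x7 + s + p) := mul_nonneg nx5 (by linarith)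
  have q7 := sq_nonneg ((x6:ℤ) + p)
  have q8 := sq_nonneg ((x7:ℤ) - s)
  have q9 : (0:ℤ) ≤ (x4:ℤ)*x6 := mul_nonneg nx4 nx6
  have q10 : (0:ℤ) ≤ (x4:ℤ)*s := mul_nonneg nx4 ns
  have q11 : (0:ℤ) ≤ (m:ℤ)*x7 := mul_nonneg nm nx7
  have q12 : (0:ℤ) ≤ (m:ℤ)*p := mul_nonneg nm np
  have hQ : (0:ℤ) ≤ QM x1 x2 x3 x4 x5 x6 x7 m s p := by linarith
  refine ⟨by linarith, ?_, ?_⟩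
  · intro h0
    have hQ0 : QM x1 x2 x3 x4 x5 x6 x7 m s p = 0 := by linarith
    rw [hQ0] at key
    -- every summand vanishes
    have e4 : ((x2:ℤ) + x3)^2 = 0 := by linarith
    have e5 : (x5:ℤ)^2 = 0 := by linarith
    have e7 : ((x6:ℤ) + p)^2 = 0 := by linarith
    have e1 : ((x1:ℤ) - x4)^2 = 0 := by linarith
    have e2 : ((x1:ℤ) - m)^2 = 0 := by linarith
    have e3 : ((x2:ℤ) - x3 + x4 + m - x6 - x7 - s - p)^2 = 0 := by linarith
    have e8 : ((x7:ℤ) - s)^2 = 0 := by linarith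
    have e10 : (x4:ℤ)*s = 0 := by linarith
    have f4 : (x2:ℤ) + x3 = 0 := by
      have := sq_eq_zero_iff.mp e4; linarith [this]
    have f5 : (x5:ℤ) = 0 := sq_eq_zero_iff.mp e5
    have f7 : (x6:ℤ) + p = 0 := sq_eq_zero_iff.mp e7
    have f1 : (x1:ℤ) - x4 = 0 := sq_eq_zero_iff.mp e1
    have f2 : (x1:ℤ) - m = 0 := sq_eq_zero_iff.mp e2
    have f3 : (x2:ℤ) - x3 + x4 + m - x6 - x7 - s - p = 0 := sq_eq_zero_iff.mp e3
    have f8 : (x7:ℤ) - s = 0 := sq_eq_zero_iff.mp e8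
    have gx2 : (x2:ℤ) = 0 := by linarith
    have gx3 : (x3:ℤ) = 0 := by linarith
    have gx6 : (x6:ℤ) = 0 := by linarith
    have gp : (p:ℤ) = 0 := by linarith
    -- x4 = x1 = m, x7 = s, and x4 + m = x7 + s, so x4 = s; with x4 * s = 0 get s = 0
    have hx4s : (x4:ℤ) = s := by linarith
    have hss : (s:ℤ) * s = 0 := by rw [hx4s] at e10; exact e10
    have gs : (s:ℤ) = 0 := mul_self_eq_zero.mp hss
    have gx1 : (x1:ℤ) = 0 := by linarith
    have gx4 : (x4:ℤ) = 0 := by linarith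
    have gx7 : (x7:ℤ) = 0 := by linarith
    have gm : (m:ℤ) = 0 := by linarith
    exact ⟨by exact_mod_cast gx1, by exact_mod_cast gx2, by exact_mod_cast gx3,
      by exact_mod_cast gx4, by exact_mod_cast f5, by exact_mod_cast gx6,
      by exact_mod_cast gx7, by exact_mod_cast gm, by exact_mod_cast gs,
      by exact_mod_cast gp⟩
  · rintro ⟨rfl, rfl, rfl, rfl, rfl, rfl, rfl, rfl, rfl, rfl⟩
    simp [QM]
end

section
/- Suppose (a₁,…,a₁₀) ∈ ℕ¹⁰ satisfies a₁+a₂+a₃ ≥ a₅+a₆+a₇, a₈+a₉ ≥ a₅+a₆, a₂ ≥ a₆, a₆+a₇ ≥ a₂+a₃, a₁₀ ≥ a₈, and a₅ ≥ a₈. Then for all (x₁,…,x₇,m,s,p) ∈ ℕ¹⁰, the integer L_{P₂} + Q_M ≥ 0, where L_{P₂} = (a₁₀−a₈)x₁ + (a₈+a₉−a₅−a₆)x₂ + (a₂−a₆)x₃ + (a₅−a₈)x₄ + (a₁+a₂+a₃−a₅−a₆−a₇)x₅ + (a₁+a₂−a₅−a₆)x₆ + (a₁−a₅)x₇ + (a₉−a₆)m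 + (a₇−a₃)s + (a₆+a₇−a₂−a₃)p; and L_{P₂} + Q_M = 0 iff all of x₁,…,x₇,m,s,p are zero. -/
set_option maxHeartbeats 1000000 in
/-- Degree estimate for polynomial element 1.(2): under the six defining
inequalities, `L_{P₂} + Q_M ≥ 0` on `ℕ¹⁰`, with equality iff all variables vanish. -/
theorem LP2_add_QM_nonneg (a1 a2 a3 a4 a5 a6 a7 a8 a9 a10 : ℕ)
    (h1 : a1 + a2 + a3 ≥ a5 + a6 + a7) (h2 : a8 + a9 ≥ a5 + a6)
    (h3 : a2 ≥ a6) (h4 : a6 + a7 ≥ a2 + a3) (h5 : a10 ≥ a8) (h6 : a5 ≥ a8) :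
    ∀ x1 x2 x3 x4 x5 x6 x7 m s p : ℕ,
      0 ≤ ((a10 : ℤ) - a8) * x1 + ((a8 : ℤ) + a9 - a5 - a6) * x2 + ((a2 : ℤ) - a6) * x3
          + ((a5 : ℤ) - a8) * x4 + ((a1 : ℤ) + a2 + a3 - a5 - a6 - a7) * x5
          + ((a1 : ℤ) + a2 - a5 - a6) * x6 + ((a1 : ℤ) - a5) * x7
          + ((a9 : ℤ) - a6) * m + ((a7 : ℤ) - a3) * s + ((a6 : ℤ) + a7 - a2 - a3) * p
          + QM x1 x2 x3 x4 x5 x6 x7 m s p ∧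
      (((a10 : ℤ) - a8) * x1 + ((a8 : ℤ) + a9 - a5 - a6) * x2 + ((a2 : ℤ) - a6) * x3
          + ((a5 : ℤ) - a8) * x4 + ((a1 : ℤ) + a2 + a3 - a5 - a6 - a7) * x5
          + ((a1 : ℤ) + a2 - a5 - a6) * x6 + ((a1 : ℤ) - a5) * x7
          + ((a9 : ℤ) - a6) * m + ((a7 : ℤ) - a3) * s + ((a6 : ℤ) + a7 - a2 - a3) * p
          + QM x1 x2 x3 x4 x5 x6 x7 m s p = 0 ↔
        x1 = 0 ∧ x2 = 0 ∧ x3 = 0 ∧ x4 = 0 ∧ x5 = 0 ∧ x6 = 0 ∧ x7 = 0 ∧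
          m = 0 ∧ s = 0 ∧ p = 0) := by

  intro x1 x2 x3 x4 x5 x6 x7 m s p
  have hx1 : (0:ℤ) ≤ (x1:ℤ) := Int.natCast_nonneg x1
  have hx2 : (0:ℤ) ≤ (x2:ℤ) := Int.natCast_nonneg x2
  have hx3 : (0:ℤ) ≤ (x3:ℤ) := Int.natCast_nonneg x3
  have hx4 : (0:ℤ) ≤ (x4:ℤ) := Int.natCast_nonneg x4
  have hx5 : (0:ℤ) ≤ (x5:ℤ) := Int.natCast_nonneg x5
  have hx6 : (0:ℤ) ≤ (x6:ℤ) := Int.natCast_nonneg x6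
  have hx7 : (0:ℤ) ≤ (x7:ℤ) := Int.natCast_nonneg x7
  have hm : (0:ℤ) ≤ (m:ℤ) := Int.natCast_nonneg m
  have hs : (0:ℤ) ≤ (s:ℤ) := Int.natCast_nonneg s
  have hp : (0:ℤ) ≤ (p:ℤ) := Int.natCast_nonneg p
  -- coefficients of L are nonneg
  have hc1 : (0:ℤ) ≤ (a10:ℤ) - a8 := by omega
  have hc2 : (0:ℤ) ≤ (a8:ℤ) + a9 - a5 - a6 := by omega
  have hc3 : (0:ℤ) ≤ (a2:ℤ) - a6 := by omega
  have hc4 : (0:ℤ) ≤ (a5:ℤ) - a8 := by omega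
  have hc5 : (0:ℤ) ≤ (a1:ℤ) + a2 + a3 - a5 - a6 - a7 := by omega
  have hc6 : (0:ℤ) ≤ (a1:ℤ) + a2 - a5 - a6 := by omega
  have hc7 : (0:ℤ) ≤ (a1:ℤ) - a5 := by omega
  have hc8 : (0:ℤ) ≤ (a9:ℤ) - a6 := by omega
  have hc9 : (0:ℤ) ≤ (a7:ℤ) - a3 := by omega
  have hc10 : (0:ℤ) ≤ (a6:ℤ) + a7 - a2 - a3 := by omega
  have hL : (0:ℤ) ≤ ((a10 : ℤ) - a8) * x1 + ((a8 : ℤ) + a9 - a5 - a6) * x2 + ((a2 : ℤ) - a6) * x3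
          + ((a5 : ℤ) - a8) * x4 + ((a1 : ℤ) + a2 + a3 - a5 - a6 - a7) * x5
          + ((a1 : ℤ) + a2 - a5 - a6) * x6 + ((a1 : ℤ) - a5) * x7
          + ((a9 : ℤ) - a6) * m + ((a7 : ℤ) - a3) * s + ((a6 : ℤ) + a7 - a2 - a3) * p := by
    have := mul_nonneg hc1 hx1
    have := mul_nonneg hc2 hx2
    have := mul_nonneg hc3 hx3
    have := mul_nonneg hc4 hx4
    have := mul_nonneg hc5 hx5
    have := mul_nonneg hc6 hx6
    have := mul_nonneg hc7 hx7
    have := mul_nonneg hc8 hm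
    have := mul_nonneg hc9 hs
    have := mul_nonneg hc10 hp
    linarith
  -- key identity for twice the quadratic form
  have key : 2 * QM x1 x2 x3 x4 x5 x6 x7 m s p =
      ((x2:ℤ) + x4 - x7 - p) ^ 2 + ((x2:ℤ) + m - x6 - s) ^ 2 + ((x1:ℤ) + x3 - x4 - m) ^ 2
        + ((x1:ℤ) - x3) ^ 2 + 2 * (x5:ℤ) ^ 2 + (x6:ℤ) ^ 2 + (x7:ℤ) ^ 2 + (s:ℤ) ^ 2 + (p:ℤ) ^ 2
        + 2 * x3 * (x6 + x7 + s + p) + 2 * x5 * (x6 + x7 + s + p)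
        + 2 * x6 * x7 + 4 * x6 * p + 2 * s * p := by
    unfold QM; ring
  have n1 := sq_nonneg ((x2:ℤ) + x4 - x7 - p)
  have n2 := sq_nonneg ((x2:ℤ) + m - x6 - s)
  have n3 := sq_nonneg ((x1:ℤ) + x3 - x4 - m)
  have n4 := sq_nonneg ((x1:ℤ) - x3)
  have n5 := sq_nonneg (x5:ℤ)
  have n6 := sq_nonneg (x6:ℤ)
  have n7 := sq_nonneg (x7:ℤ)
  have n8 := sq_nonneg (s:ℤ)
  have n9 := sq_nonneg (p:ℤ)
  have n10 : (0:ℤ) ≤ 2 * x3 * (x6 + x7 + s + p) := by positivity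
  have n11 : (0:ℤ) ≤ 2 * x5 * (x6 + x7 + s + p) := by positivity
  have n12 : (0:ℤ) ≤ 2 * x6 * x7 := by positivity
  have n13 : (0:ℤ) ≤ 4 * x6 * p := by positivity
  have n14 : (0:ℤ) ≤ 2 * s * p := by positivity
  have hQ : (0:ℤ) ≤ QM x1 x2 x3 x4 x5 x6 x7 m s p := by linarith
  refine ⟨by linarith, ?_, ?_⟩
  · intro heq
    have hQ0 : QM x1 x2 x3 x4 x5 x6 x7 m s p = 0 := by linarith
    rw [hQ0, mul_zero] at key
    -- each summand vanishes
    have e5 : (x5:ℤ) ^ 2 = 0 := by linarith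
    have e6 : (x6:ℤ) ^ 2 = 0 := by linarith
    have e7 : (x7:ℤ) ^ 2 = 0 := by linarith
    have e8 : (s:ℤ) ^ 2 = 0 := by linarith
    have e9 : (p:ℤ) ^ 2 = 0 := by linarith
    have e1 : ((x2:ℤ) + x4 - x7 - p) ^ 2 = 0 := by linarith
    have e2 : ((x2:ℤ) + m - x6 - s) ^ 2 = 0 := by linarith
    have e3 : ((x1:ℤ) + x3 - x4 - m) ^ 2 = 0 := by linarith
    have e4 : ((x1:ℤ) - x3) ^ 2 = 0 := by linarith
    have f5 := sq_eq_zero_iff.mp e5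
    have f6 := sq_eq_zero_iff.mp e6
    have f7 := sq_eq_zero_iff.mp e7
    have f8 := sq_eq_zero_iff.mp e8
    have f9 := sq_eq_zero_iff.mp e9
    have f1 := sq_eq_zero_iff.mp e1
    have f2 := sq_eq_zero_iff.mp e2
    have f3 := sq_eq_zero_iff.mp e3
    have f4 := sq_eq_zero_iff.mp e4
    refine ⟨?_, ?_, ?_, ?_, ?_, ?_, ?_, ?_, ?_, ?_⟩ <;> omega
  · rintro ⟨rfl, rfl, rfl, rfl, rfl, rfl, rfl, rfl, rfl, rfl⟩
    simp [QM]
end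

section
/- Suppose (a₁,…,a₁₀) ∈ ℕ¹⁰ satisfies a₈+a₉ ≥ a₅+a₆, a₆+a₇ ≥ a₂+a₃, a₂ ≥ a₆, a₅ ≥ a₁ ≥ a₈, and a₁₀ ≥ a₈. Let L_{P₃}(x₁,…,x₇,m,s,p,w) = (a₁₀−a₈)x₁ + (a₈+a₉−a₅−a₆)x₂ + (a₂+a₅−a₁−a₆)x₃ + (a₁−a₈)x₄ + (a₅+a₆+a₇−a₁−a₂−a₃)x₅ + (a₂−a₆)x₆ + (a₅−a₁)(x₇−w) + (a₉−a₆)m + (a₇−a₃)s + (a₆+a₇−a₂−a₃)p + (a₅−a₁)(x₄−x₃−x₆−w), and Q_{P₃} = Q_M(x₁,…,x₇,m,s,p) + 2(x₄−x₃−x₆−w)(x₇−w). Then for all non-negative integers x₁,…,x₇,m,s,p,w with x₄−x₃−x₆−w ≥ 0 and x₇−w ≥ 0, we have L_{P₃} + Q_{P₃} ≥ 0, with equality iff x₁ = ⋯ = x₇ = m = s = p = w = 0. -/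
lemma QM_key (x1 x2 x3 x4 x5 x6 x7 m s p : ℤ) :
    4 * QM x1 x2 x3 x4 x5 x6 x7 m s p =
      4*(x2*x4) + 4*(x2*x5) + 4*(x2*m) + 4*(x3*x6) + 4*(x3*x7) + 4*(x3*s) + 4*(x3*p)
      + 4*(x5*s) + 4*(x5*p) + 8*(x6*p)
      + 2*(x6 - m + s)^2 + 2*(x4 - x7 - p)^2 + 2*(x2 - x5 - x6 - x7)^2
      + 2*(x2 - s - p)^2 + (x1 - x3 - x5)^2 + (x1 - x3 + x5)^2
      + 2*(x1 + x3 - x4 - m)^2 := by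
  unfold QM; ring

lemma QM_copos (x1 x2 x3 x4 x5 x6 x7 m s p : ℤ)
    (n1 : 0 ≤ x1) (n2 : 0 ≤ x2) (n3 : 0 ≤ x3) (n4 : 0 ≤ x4) (n5 : 0 ≤ x5)
    (n6 : 0 ≤ x6) (n7 : 0 ≤ x7) (nm : 0 ≤ m) (ns : 0 ≤ s) (np : 0 ≤ p) :
    0 ≤ QM x1 x2 x3 x4 x5 x6 x7 m s p ∧
      (QM x1 x2 x3 x4 x5 x6 x7 m s p = 0 →
        x1 = 0 ∧ x2 = 0 ∧ x3 = 0 ∧ x4 = 0 ∧ x5 = 0 ∧ x6 = 0 ∧ x7 = 0 ∧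
          m = 0 ∧ s = 0 ∧ p = 0) := by
  have key := QM_key x1 x2 x3 x4 x5 x6 x7 m s p
  have t1 : 0 ≤ x2*x4 := mul_nonneg n2 n4
  have t2 : 0 ≤ x2*x5 := mul_nonneg n2 n5
  have t3 : 0 ≤ x2*m := mul_nonneg n2 nm
  have t4 : 0 ≤ x3*x6 := mul_nonneg n3 n6
  have t5 : 0 ≤ x3*x7 := mul_nonneg n3 n7
  have t6 : 0 ≤ x3*s := mul_nonneg n3 ns
  have t7 : 0 ≤ x3*p := mul_nonneg n3 np
  have t8 : 0 ≤ x5*s := mul_nonneg n5 ns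
  have t9 : 0 ≤ x5*p := mul_nonneg n5 np
  have t10 : 0 ≤ x6*p := mul_nonneg n6 np
  have s1 := sq_nonneg (x6 - m + s)
  have s2 := sq_nonneg (x4 - x7 - p)
  have s3 := sq_nonneg (x2 - x5 - x6 - x7)
  have s4 := sq_nonneg (x2 - s - p)
  have s5 := sq_nonneg (x1 - x3 - x5)
  have s6 := sq_nonneg (x1 - x3 + x5)
  have s7 := sq_nonneg (x1 + x3 - x4 - m)
  constructor
  · linarith
  · intro hQ
    rw [hQ] at key
    -- every term is zero
    have e1 : (x6 - m + s)^2 = 0 := by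
      linarith only [key, t1,t2,t3,t4,t5,t6,t7,t8,t9,t10,s1,s2,s3,s4,s5,s6,s7]
    have e2 : (x4 - x7 - p)^2 = 0 := by
      linarith only [key, t1,t2,t3,t4,t5,t6,t7,t8,t9,t10,s1,s2,s3,s4,s5,s6,s7]
    have e3 : (x2 - x5 - x6 - x7)^2 = 0 := by
      linarith only [key, t1,t2,t3,t4,t5,t6,t7,t8,t9,t10,s1,s2,s3,s4,s5,s6,s7]
    have e4 : (x2 - s - p)^2 = 0 := by
      linarith only [key, t1,t2,t3,t4,t5,t6,t7,t8,t9,t10,s1,s2,s3,s4,s5,s6,s7]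
    have e5 : (x1 - x3 - x5)^2 = 0 := by
      linarith only [key, t1,t2,t3,t4,t5,t6,t7,t8,t9,t10,s1,s2,s3,s4,s5,s6,s7]
    have e6 : (x1 - x3 + x5)^2 = 0 := by
      linarith only [key, t1,t2,t3,t4,t5,t6,t7,t8,t9,t10,s1,s2,s3,s4,s5,s6,s7]
    have e7 : (x1 + x3 - x4 - m)^2 = 0 := by
      linarith only [key, t1,t2,t3,t4,t5,t6,t7,t8,t9,t10,s1,s2,s3,s4,s5,s6,s7]
    have p4 : x3*x6 = 0 := by
      linarith only [key, t1,t2,t3,t4,t5,t6,t7,t8,t9,t10,s1,s2,s3,s4,s5,s6,s7]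
    have p5 : x3*x7 = 0 := by
      linarith only [key, t1,t2,t3,t4,t5,t6,t7,t8,t9,t10,s1,s2,s3,s4,s5,s6,s7]
    have p6 : x3*s = 0 := by
      linarith only [key, t1,t2,t3,t4,t5,t6,t7,t8,t9,t10,s1,s2,s3,s4,s5,s6,s7]
    have p7 : x3*p = 0 := by
      linarith only [key, t1,t2,t3,t4,t5,t6,t7,t8,t9,t10,s1,s2,s3,s4,s5,s6,s7]
    have f1 : x6 - m + s = 0 := pow_eq_zero_iff (two_ne_zero) |>.mp e1
    have f2 : x4 - x7 - p = 0 := pow_eq_zero_iff (two_ne_zero) |>.mp e2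
    have f3 : x2 - x5 - x6 - x7 = 0 := pow_eq_zero_iff (two_ne_zero) |>.mp e3
    have f4 : x2 - s - p = 0 := pow_eq_zero_iff (two_ne_zero) |>.mp e4
    have f5 : x1 - x3 - x5 = 0 := pow_eq_zero_iff (two_ne_zero) |>.mp e5
    have f6 : x1 - x3 + x5 = 0 := pow_eq_zero_iff (two_ne_zero) |>.mp e6
    have f7 : x1 + x3 - x4 - m = 0 := pow_eq_zero_iff (two_ne_zero) |>.mp e7
    have hx5 : x5 = 0 := by linarith
    by_cases hx3 : x3 = 0
    · refine ⟨by linarith, ?_, hx3, ?_, hx5, ?_, ?_, ?_, ?_, ?_⟩ <;> linarith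
    · exfalso
      have h6' : x6 = 0 := (mul_eq_zero.mp p4).resolve_left hx3
      have h7' : x7 = 0 := (mul_eq_zero.mp p5).resolve_left hx3
      have hs' : s = 0 := (mul_eq_zero.mp p6).resolve_left hx3
      have hp' : p = 0 := (mul_eq_zero.mp p7).resolve_left hx3
      have : x3 = 0 := by linarith
      exact hx3 this

/-- Degree estimate for polynomial element 1.(3): under the defining inequalities,
`L_{P₃} + Q_{P₃} ≥ 0` on the admissible region, with equality iff all variables vanish. -/
theorem LP3_add_QP3_nonneg (a1 a2 a3 a4 a5 a6 a7 a8 a9 a10 : ℕ)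
    (h1 : a8 + a9 ≥ a5 + a6) (h2 : a6 + a7 ≥ a2 + a3) (h3 : a2 ≥ a6)
    (h4 : a5 ≥ a1) (h5 : a1 ≥ a8) (h6 : a10 ≥ a8) :
    ∀ x1 x2 x3 x4 x5 x6 x7 m s p w : ℕ,
      (0 : ℤ) ≤ (x4 : ℤ) - x3 - x6 - w → (0 : ℤ) ≤ (x7 : ℤ) - w →
      (0 ≤ ((a10 : ℤ) - a8) * x1 + ((a8 : ℤ) + a9 - a5 - a6) * x2
          + ((a2 : ℤ) + a5 - a1 - a6) * x3 + ((a1 : ℤ) - a8) * x4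
          + ((a5 : ℤ) + a6 + a7 - a1 - a2 - a3) * x5 + ((a2 : ℤ) - a6) * x6
          + ((a5 : ℤ) - a1) * ((x7 : ℤ) - w) + ((a9 : ℤ) - a6) * m
          + ((a7 : ℤ) - a3) * s + ((a6 : ℤ) + a7 - a2 - a3) * p
          + ((a5 : ℤ) - a1) * ((x4 : ℤ) - x3 - x6 - w)
          + (QM x1 x2 x3 x4 x5 x6 x7 m s p
              + 2 * ((x4 : ℤ) - x3 - x6 - w) * ((x7 : ℤ) - w)) ∧
        (((a10 : ℤ) - a8) * x1 + ((a8 : ℤ) + a9 - a5 - a6) * x2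
            + ((a2 : ℤ) + a5 - a1 - a6) * x3 + ((a1 : ℤ) - a8) * x4
            + ((a5 : ℤ) + a6 + a7 - a1 - a2 - a3) * x5 + ((a2 : ℤ) - a6) * x6
            + ((a5 : ℤ) - a1) * ((x7 : ℤ) - w) + ((a9 : ℤ) - a6) * m
            + ((a7 : ℤ) - a3) * s + ((a6 : ℤ) + a7 - a2 - a3) * p
            + ((a5 : ℤ) - a1) * ((x4 : ℤ) - x3 - x6 - w)
            + (QM x1 x2 x3 x4 x5 x6 x7 m s p
                + 2 * ((x4 : ℤ) - x3 - x6 - w) * ((x7 : ℤ) - w)) = 0 ↔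
          x1 = 0 ∧ x2 = 0 ∧ x3 = 0 ∧ x4 = 0 ∧ x5 = 0 ∧ x6 = 0 ∧ x7 = 0 ∧
            m = 0 ∧ s = 0 ∧ p = 0 ∧ w = 0)) := by
  intro x1 x2 x3 x4 x5 x6 x7 m s p w hA hB
  have c1 : ((a8:ℤ) + a9) ≥ (a5:ℤ) + a6 := by exact_mod_cast h1
  have c2 : ((a6:ℤ) + a7) ≥ (a2:ℤ) + a3 := by exact_mod_cast h2
  have c3 : (a2:ℤ) ≥ (a6:ℤ) := by exact_mod_cast h3
  have c4 : (a5:ℤ) ≥ (a1:ℤ) := by exact_mod_cast h4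
  have c5 : (a1:ℤ) ≥ (a8:ℤ) := by exact_mod_cast h5
  have c6 : (a10:ℤ) ≥ (a8:ℤ) := by exact_mod_cast h6
  have n1 : (0:ℤ) ≤ x1 := Int.natCast_nonneg _
  have n2 : (0:ℤ) ≤ x2 := Int.natCast_nonneg _
  have n3 : (0:ℤ) ≤ x3 := Int.natCast_nonneg _
  have n4 : (0:ℤ) ≤ x4 := Int.natCast_nonneg _
  have n5 : (0:ℤ) ≤ x5 := Int.natCast_nonneg _
  have n6 : (0:ℤ) ≤ x6 := Int.natCast_nonneg _
  have n7 : (0:ℤ) ≤ x7 := Int.natCast_nonneg _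
  have nm : (0:ℤ) ≤ m := Int.natCast_nonneg _
  have ns : (0:ℤ) ≤ s := Int.natCast_nonneg _
  have np' : (0:ℤ) ≤ p := Int.natCast_nonneg _
  have nw : (0:ℤ) ≤ w := Int.natCast_nonneg _
  obtain ⟨hQ0, hQz⟩ := QM_copos (x1:ℤ) x2 x3 x4 x5 x6 x7 m s p
    n1 n2 n3 n4 n5 n6 n7 nm ns np'
  have l1 : (0:ℤ) ≤ ((a10:ℤ) - a8) * x1 := mul_nonneg (by linarith) n1
  have l2 : (0:ℤ) ≤ ((a8:ℤ) + a9 - a5 - a6) * x2 := mul_nonneg (by linarith) n2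
  have l3 : (0:ℤ) ≤ ((a2:ℤ) + a5 - a1 - a6) * x3 := mul_nonneg (by linarith) n3
  have l4 : (0:ℤ) ≤ ((a1:ℤ) - a8) * x4 := mul_nonneg (by linarith) n4
  have l5 : (0:ℤ) ≤ ((a5:ℤ) + a6 + a7 - a1 - a2 - a3) * x5 := mul_nonneg (by linarith) n5
  have l6 : (0:ℤ) ≤ ((a2:ℤ) - a6) * x6 := mul_nonneg (by linarith) n6
  have l7 : (0:ℤ) ≤ ((a5:ℤ) - a1) * ((x7:ℤ) - w) := mul_nonneg (by linarith) hB
  have l8 : (0:ℤ) ≤ ((a9:ℤ) - a6) * m := mul_nonneg (by linarith) nm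
  have l9 : (0:ℤ) ≤ ((a7:ℤ) - a3) * s := mul_nonneg (by linarith) ns
  have l10 : (0:ℤ) ≤ ((a6:ℤ) + a7 - a2 - a3) * p := mul_nonneg (by linarith) np'
  have l11 : (0:ℤ) ≤ ((a5:ℤ) - a1) * ((x4:ℤ) - x3 - x6 - w) := mul_nonneg (by linarith) hA
  have lAB : (0:ℤ) ≤ 2 * ((x4:ℤ) - x3 - x6 - w) * ((x7:ℤ) - w) :=
    mul_nonneg (mul_nonneg (by norm_num) hA) hB
  refine ⟨by linarith, ?_, ?_⟩
  · intro heq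
    have hQM : QM (x1:ℤ) x2 x3 x4 x5 x6 x7 m s p = 0 := by linarith
    obtain ⟨z1, z2, z3, z4, z5, z6, z7, zm, zs, zp⟩ := hQz hQM
    have w0 : (w:ℤ) = 0 := by rw [z3, z4, z6] at hA; linarith
    exact ⟨Nat.cast_eq_zero.mp z1, Nat.cast_eq_zero.mp z2, Nat.cast_eq_zero.mp z3,
      Nat.cast_eq_zero.mp z4, Nat.cast_eq_zero.mp z5, Nat.cast_eq_zero.mp z6,
      Nat.cast_eq_zero.mp z7, Nat.cast_eq_zero.mp zm, Nat.cast_eq_zero.mp zs,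
      Nat.cast_eq_zero.mp zp, Nat.cast_eq_zero.mp w0⟩
  · rintro ⟨rfl, rfl, rfl, rfl, rfl, rfl, rfl, rfl, rfl, rfl, rfl⟩
    simp [QM]
end
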